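/- arXiv:2509.14614 — 10 statements merged into one kernel-verified Lean document; each statement's English description precedes it below -/
import Mathlib

section
/- Let α and β be ordinals with α ≤ β. Then there is an order embedding from the quotient of α.toType by ∼_ω into the quotient of β.toType by ∼_ω, where each quotient carries the induced linear order. In particular, the order type of the countable condensation is a weakly order-preserving (endomorphic) map on the class of ordinals. -/
/-- The countable condensation `x ∼_ω y ↔ Set.uIcc x y is countable` as a setoid. -/
def ccSetoid (L : Type*) [LinearOrder L] : Setoid L where
  r x y := (Set.uIcc x y).Countable
  iseqv := by
    refine ⟨fun x => by simp, fun {x y} h => by rwa [Set.uIcc_comm], ?_⟩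
    intro x y z h1 h2
    exact (h1.union h2).mono Set.uIcc_subset_uIcc_union_uIcc

/-- The induced linear order on the quotient `L/∼_ω`:
`⟦x⟧ ≤ ⟦y⟧` iff `x ∼_ω y` or `x < y`. -/
def ccLE (L : Type*) [LinearOrder L] (a b : Quotient (ccSetoid L)) : Prop :=
  ∃ x y : L, a = Quotient.mk (ccSetoid L) x ∧ b = Quotient.mk (ccSetoid L) y ∧
    ((Set.uIcc x y).Countable ∨ x < y)

/-! `α.ToType` is an initial segment of `β.ToType`. An order embedding onto a convex subset
maps intervals onto intervals, so it preserves and reflects `∼_ω`, and hence descends to an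
embedding of the quotients. -/

open Set

/-- `ccLE` does not depend on the chosen representatives, because `∼_ω`-classes are convex. -/
theorem ccLE_mk_iff {L : Type*} [LinearOrder L] {x y : L} :
    ccLE L (Quotient.mk _ x) (Quotient.mk _ y) ↔ (uIcc x y).Countable ∨ x < y := by
  refine ⟨?_, fun hxy => ⟨x, y, rfl, rfl, hxy⟩⟩
  rintro ⟨u, v, hu, hv, huv⟩
  have hxu : (uIcc x u).Countable := Quotient.exact hu
  have hvy : (uIcc v y).Countable := (ccSetoid L).iseqv.symm (Quotient.exact hv)
  rw [or_iff_not_imp_right, not_lt]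
  intro hyx
  rcases huv with huv | huv
  · exact (ccSetoid L).iseqv.trans ((ccSetoid L).iseqv.trans hxu huv) hvy
  rcases le_total u y with huy | hyu
  · exact hxu.mono (uIcc_subset_uIcc_left (mem_uIcc_of_ge huy hyx))
  · exact (ccSetoid L).iseqv.trans hxu
      (hvy.mono (uIcc_subset_uIcc_right (mem_uIcc_of_ge hyu huv.le)))

namespace OrderEmbedding

variable {α β : Type*} [LinearOrder α] [LinearOrder β]

theorem countable_uIcc_iff (e : α ↪o β) (he : (range e).OrdConnected) (x y : α) :
    (uIcc (e x) (e y)).Countable ↔ (uIcc x y).Countable := by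
  refine ⟨fun h => by simpa only [preimage_uIcc] using h.preimage e.injective, fun h => ?_⟩
  rw [← image_preimage_eq_of_subset (he.uIcc_subset ⟨x, rfl⟩ ⟨y, rfl⟩), preimage_uIcc]
  exact h.image e

def ccQuotientEmbedding (e : α ↪o β) (he : (range e).OrdConnected) : ccLE α ↪r ccLE β where
  toFun := Quotient.map e fun x y => (e.countable_uIcc_iff he x y).2
  inj' := by
    rintro ⟨x⟩ ⟨y⟩ hxy
    exact Quotient.sound ((e.countable_uIcc_iff he x y).1 (Quotient.exact hxy))
  map_rel_iff' := by
    rintro ⟨x⟩ ⟨y⟩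
    exact ccLE_mk_iff.trans ((or_congr (e.countable_uIcc_iff he x y) e.lt_iff_lt).trans
      ccLE_mk_iff.symm)

end OrderEmbedding

/-- If `α ≤ β` are ordinals, then the quotient of `α.toType` by the
countable condensation order-embeds into the quotient of `β.toType` by the countable
condensation (each quotient carrying the induced linear order): the order type of the
countable condensation is weakly order-preserving on ordinals. -/
theorem countableCondensation_mono_on_ordinals (α β : Ordinal) (h : α ≤ β) :
    Nonempty (RelEmbedding (ccLE α.ToType) (ccLE β.ToType)) := by
  obtain ⟨f⟩ : Nonempty (α.ToType ≤i β.ToType) := by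
    rwa [← Ordinal.type_le_iff, Ordinal.type_toType, Ordinal.type_toType]
  exact ⟨f.toOrderEmbedding.ccQuotientEmbedding f.isLowerSet_range.ordConnected⟩
end

section
/- Let O₂ be the canonical linear order of order type the second uncountable ordinal ω₂ (e.g. (Cardinal.aleph 2).ord.toType). Then the quotient of O₂ by the countable condensation ∼_ω, with its induced linear order, is order-isomorphic to O₂ itself. -/
/-- The canonical linear order of order type `ω₂`. -/
noncomputable abbrev Omega2 : Type := (Cardinal.aleph 2).ord.ToType

/-!
Choosing a representative of each class embeds the quotient of a well order `L` into `L`, so the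
quotient is a well order of type at most that of `L`. A class is convex and each of its proper
initial segments lies in a countable interval starting at the least element of the class, so every
class has at most `ℵ₁` elements. When `L` is an initial ordinal of cardinality `> ℵ₁`, such as
`ω₂`, the quotient therefore has the cardinality of `L`, hence also its order type.
-/

open Cardinal Ordinal Set

theorem mk_le_aleph_one_of_countable_Iio {α : Type*} [LinearOrder α] [WellFoundedLT α]
    (h : ∀ x : α, (Iio x).Countable) : #α ≤ ℵ₁ := by
  by_contra! hlt
  have htype : (ℵ₁).ord < typeLT α :=
    lt_of_not_ge fun hle ↦ hlt.not_ge (by simpa using card_le_card hle)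
  obtain ⟨x, hx⟩ := typein_surj _ htype
  have hIio : #(Iio x) = ℵ₁ := by
    change #{y // y < x} = ℵ₁
    rw [← card_typein, hx, card_ord]
  exact aleph0_lt_aleph_one.not_ge (hIio ▸ le_aleph0_iff_set_countable.2 (h x))

theorem countable_setOf_lt_and_countable_uIcc {α : Type*} [LinearOrder α] [WellFoundedLT α]
    (y : α) : {z | z < y ∧ (uIcc z y).Countable}.Countable := by
  obtain ⟨m, hm, hmin⟩ := wellFounded_lt.has_min {z | (uIcc z y).Countable} ⟨y, by simp⟩
  exact hm.mono fun z ⟨hzy, hz⟩ ↦ Icc_subset_uIcc ⟨not_lt.1 (hmin z hz), hzy.le⟩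

namespace ccSetoid

variable {L : Type*} [LinearOrder L]

instance ordConnected_class (a : Quotient (ccSetoid L)) :
    OrdConnected (Quotient.mk (ccSetoid L) ⁻¹' {a}) := by
  refine ⟨fun x hx y hy z hz ↦ ?_⟩
  have hxy : (uIcc x y).Countable := Quotient.exact (hx.trans hy.symm)
  have hxz : (uIcc x z).Countable :=
    hxy.mono (uIcc_subset_uIcc left_mem_uIcc (Icc_subset_uIcc hz))
  exact (Quotient.sound hxz).symm.trans hx

noncomputable instance : LinearOrder (Quotient (ccSetoid L)) := by
  classical exact Quotient.instLinearOrder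

theorem countable_uIcc_or_lt_iff {x y : L} :
    (uIcc x y).Countable ∨ x < y ↔ x ≤ y ∨ (uIcc x y).Countable := by
  rcases eq_or_ne x y with rfl | hne
  · simp
  · rw [hne.le_iff_lt, or_comm]

theorem ccLE_eq_le : ccLE L = (· ≤ ·) := by
  ext a b
  constructor
  · rintro ⟨x, y, rfl, rfl, h⟩
    exact Quotient.mk_le_mk.2 (countable_uIcc_or_lt_iff.1 h)
  · induction a using Quotient.inductionOn with | h x
    induction b using Quotient.inductionOn with | h y
    exact fun h ↦ ⟨x, y, rfl, rfl, countable_uIcc_or_lt_iff.2 (Quotient.mk_le_mk.1 h)⟩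

theorem strictMono_out : StrictMono (Quotient.out : Quotient (ccSetoid L) → L) := by
  intro a b h
  rw [← a.out_eq, ← b.out_eq] at h
  exact Quotient.lt_of_mk_lt_mk h

section WellFounded

variable [WellFoundedLT L]

theorem mk_preimage_mk_le_aleph_one (a : Quotient (ccSetoid L)) :
    #(Quotient.mk (ccSetoid L) ⁻¹' {a}) ≤ ℵ₁ := by
  refine mk_le_aleph_one_of_countable_Iio fun w ↦ ?_
  refine ((countable_setOf_lt_and_countable_uIcc w.1).preimage Subtype.val_injective).mono ?_
  exact fun z hz ↦ ⟨hz, Quotient.exact (z.2.trans w.2.symm)⟩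

instance : WellFoundedLT (Quotient (ccSetoid L)) := strictMono_out.wellFoundedLT

theorem nonempty_orderIso_self (hL : ord #L = typeLT L) (h₁ : ℵ₁ < #L) :
    Nonempty (Quotient (ccSetoid L) ≃o L) := by
  have hcard : #L ≤ #(Quotient (ccSetoid L)) * ℵ₁ :=
    mk_le_mk_mul_of_mk_preimage_le _ mk_preimage_mk_le_aleph_one
  have hQ : #L ≤ #(Quotient (ccSetoid L)) := by
    by_contra! hlt
    exact (mul_lt_of_lt (aleph0_le_aleph 1 |>.trans h₁.le) hlt h₁).not_ge hcard
  have hle : typeLT (Quotient (ccSetoid L)) ≤ typeLT L :=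
    type_le_iff'.2 ⟨(OrderEmbedding.ofStrictMono _ strictMono_out).ltEmbedding⟩
  have hge : typeLT L ≤ typeLT (Quotient (ccSetoid L)) :=
    hL ▸ (ord_le_ord.2 hQ).trans (ord_le_type _)
  obtain ⟨e⟩ := type_eq.1 (hle.antisymm hge)
  exact ⟨OrderIso.ofRelIsoLT e⟩

end WellFounded

end ccSetoid

/-- The quotient of (the canonical linear order of order type) `ω₂` by
the countable condensation, with its induced linear order, is order-isomorphic to `ω₂`
itself. -/
theorem omega2_countableCondensation_iso_self :
    Nonempty (RelIso (ccLE Omega2) (fun a b : Omega2 => a ≤ b)) := by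
  rw [ccSetoid.ccLE_eq_le]
  exact ccSetoid.nonempty_orderIso_self (by simp) (by simp)
end

section
/- In the ω₁-lengthened rational line U, any two elements are equivalent under the countable condensation: for all x y : U, the interval Set.uIcc x y is countable. Hence U/∼_ω ≅ 1. -/
/-- The canonical linear order of order type `ω₁`. -/
noncomputable abbrev Omega1 : Type := (Cardinal.aleph 1).ord.ToType

/-- `ω₁` consecutive blocks, each consisting of one point followed by a copy of `ℚ`. -/
noncomputable abbrev Dline : Type := Lex (Omega1 × (PUnit ⊕ₗ ℚ))

/-- The `ω₁`-lengthened rational line `U`. -/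
noncomputable abbrev Uline : Type := (OrderDual Dline) ⊕ₗ (ℚ ⊕ₗ Dline)

/-!
Every proper initial segment of `ω₁` is countable, hence so is every initial segment of the
lexicographic product `D = ω₁ ×ₗ (1 + ℚ)`, and dually every final segment of `Dᵒᵈ`. An interval
`[x, y]` of `U = Dᵒᵈ + ℚ + D` meets `Dᵒᵈ` inside the final segment above `x`, meets `ℚ`
countably, and meets `D` inside the initial segment below `y`.
-/

open Set

lemma Omega1.countable_Iic (γ : Omega1) : (Iic γ).Countable := by
  rw [← Iio_union_right]
  refine .union ?_ (countable_singleton γ)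
  rw [← Cardinal.le_aleph0_iff_set_countable, ← Cardinal.lt_aleph_one_iff]
  simpa using Cardinal.mk_Iio_lt γ

instance {α : Type*} [Countable α] : Countable (Lex α) := ‹Countable α›

namespace Prod.Lex

variable {α β : Type*}

lemma countable_Iic [Preorder α] [Preorder β] [Countable β] (hα : ∀ a : α, (Iic a).Countable)
    (z : α ×ₗ β) : (Iic z).Countable := by
  have hsub : Iic z ⊆ ofLex ⁻¹' (Iic (ofLex z).1 ×ˢ univ) :=
    fun w hw => ⟨monotone_fst_ofLex hw, trivial⟩
  exact (((hα _).prod countable_univ).preimage ofLex.injective).mono hsub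

end Prod.Lex

namespace Sum.Lex

variable {α β : Type*} [Preorder α] [Preorder β]

lemma countable_Iic [Countable α] (hβ : ∀ b : β, (Iic b).Countable) (z : α ⊕ₗ β) :
    (Iic z).Countable := by
  have hinl : (range (toLex ∘ inl : α → α ⊕ₗ β)).Countable := countable_range _
  rcases z with a | b
  · refine hinl.mono ?_
    rintro (a' | b') h
    · exact mem_range_self a'
    · exact absurd h not_inr_le_inl
  · refine (hinl.union ((hβ b).image (toLex ∘ inr))).mono ?_
    rintro (a' | b') h
    · exact .inl (mem_range_self a')
    · exact .inr (mem_image_of_mem _ (inr_le_inr_iff.1 h))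

lemma countable_Icc (hα : ∀ a : α, (Ici a).Countable) (hβ : ∀ b : β, (Iic b).Countable)
    (x y : α ⊕ₗ β) : (Icc x y).Countable := by
  have hleft : (toLex ∘ inl ⁻¹' Icc x y).Countable := by
    rcases x with a | _
    · exact (hα a).mono fun a' h => inl_le_inl_iff.1 h.1
    · exact countable_empty.mono fun a' h => not_inr_le_inl h.1
  have hright : (toLex ∘ inr ⁻¹' Icc x y).Countable := by
    rcases y with _ | b
    · exact countable_empty.mono fun b' h => not_inr_le_inl h.2
    · exact (hβ b).mono fun b' h => inr_le_inr_iff.1 h.2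
  refine ((hleft.image (toLex ∘ inl)).union (hright.image (toLex ∘ inr))).mono ?_
  rintro (a | b) h
  · exact .inl ⟨a, h, rfl⟩
  · exact .inr ⟨b, h, rfl⟩

end Sum.Lex

lemma Dline.countable_Iic (d : Dline) : (Iic d).Countable :=
  Prod.Lex.countable_Iic Omega1.countable_Iic d

/-- In the `ω₁`-lengthened rational line `U`, any two elements are
equivalent under the countable condensation: every interval `Set.uIcc x y` is countable.
Hence `U/∼_ω ≅ 1`. -/
theorem Uline_condenses_to_one (x y : Uline) : (Set.uIcc x y).Countable :=
  Sum.Lex.countable_Icc (fun a => Dline.countable_Iic (OrderDual.ofDual a))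
    (Sum.Lex.countable_Iic Dline.countable_Iic) _ _
end

section
/- If L is a linear order that condenses to 1 under the countable condensation, then the cardinality of L is at most ℵ₁. -/
/-!
If every initial segment `Iic x` of a linear order has at most `κ` elements (`κ` infinite), then
a set of size `κ⁺` cannot be bounded above, so the cofinality is at most `κ⁺`; the order, being
the union of the initial segments of a cofinal set, then has at most `κ⁺ · κ = κ⁺` elements.
Splitting `L` at a point, both halves have countable initial segments (in the order or its dual).
-/

open Cardinal Order OrderDual Set

section

variable {α : Type*} [LinearOrder α] {κ : Cardinal}

theorem Order.cof_le_succ_of_forall_mk_Iic_le (h : ∀ x : α, #(Iic x) ≤ κ) : cof α ≤ succ κ := by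
  by_contra! hlt
  obtain ⟨t, ht⟩ := le_mk_iff_exists_set.1 (hlt.le.trans (cof_le_cardinalMk α))
  have ht_bdd : ¬ IsCofinal t := fun ht_cof => ((cof_le ht_cof).trans_eq ht).not_gt hlt
  obtain ⟨x, hx⟩ := not_isCofinal_iff.1 ht_bdd
  have ht_le : #t ≤ κ := (mk_le_mk_of_subset fun y hy => (hx y hy).le).trans (h x)
  exact (lt_succ κ).not_ge (ht ▸ ht_le)

theorem Cardinal.mk_le_cof_mul_of_forall_mk_Iic_le (h : ∀ x : α, #(Iic x) ≤ κ) :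
    #α ≤ cof α * κ := by
  obtain ⟨s, hs, hs_card⟩ := exists_cof_eq α
  calc #α = #(⋃ x ∈ s, Iic x) := by rw [isCofinal_iff_iUnion_Iic_eq_univ.1 hs, mk_univ]
    _ ≤ #s * ⨆ x : s, #(Iic x.1) := mk_biUnion_le _ _
    _ ≤ cof α * κ := by rw [hs_card]; gcongr; exact ciSup_le' fun x => h x

theorem Cardinal.mk_le_succ_of_forall_mk_Iic_le (hκ : ℵ₀ ≤ κ) (h : ∀ x : α, #(Iic x) ≤ κ) :
    #α ≤ succ κ :=
  calc #α ≤ cof α * κ := mk_le_cof_mul_of_forall_mk_Iic_le h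
    _ ≤ succ κ * κ := by gcongr; exact cof_le_succ_of_forall_mk_Iic_le h
    _ ≤ succ κ := (mul_le_max_of_aleph0_le_left (hκ.trans (le_succ κ))).trans_eq
      (max_eq_left (le_succ κ))

theorem Cardinal.mk_Ici_le_succ_of_forall_mk_Icc_le (hκ : ℵ₀ ≤ κ) (a : α)
    (h : ∀ b, #(Icc a b) ≤ κ) : #(Ici a) ≤ succ κ := by
  refine mk_le_succ_of_forall_mk_Iic_le hκ fun b => ?_
  have : Iic b = ((↑) : Ici a → α) ⁻¹' Icc a b := by
    ext y
    exact ⟨fun hy => ⟨y.2, hy⟩, fun hy => hy.2⟩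
  rw [this]
  exact (mk_preimage_of_injective _ _ Subtype.val_injective).trans (h b)

theorem Cardinal.mk_le_succ_of_forall_mk_Icc_le (hκ : ℵ₀ ≤ κ) (h : ∀ a b : α, #(Icc a b) ≤ κ) :
    #α ≤ succ κ := by
  cases isEmpty_or_nonempty α
  · simp
  obtain ⟨a⟩ := ‹Nonempty α›
  have h_Iic : #(Iic a) ≤ succ κ := by
    refine mk_Ici_le_succ_of_forall_mk_Icc_le (α := αᵒᵈ) hκ (toDual a) fun b => ?_
    rw [← toDual_ofDual b, Icc_toDual]
    exact (mk_preimage_of_injective _ _ ofDual.injective).trans (h _ _)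
  calc #α = #(Iic a ∪ Ici a : Set α) := by rw [Iic_union_Ici, mk_univ]
    _ ≤ #(Iic a) + #(Ici a) := mk_union_le _ _
    _ ≤ succ κ + succ κ := add_le_add h_Iic (mk_Ici_le_succ_of_forall_mk_Icc_le hκ a (h a))
    _ = succ κ := add_eq_self (hκ.trans (le_succ κ))

end

/-- If `L` condenses to `1` under the countable condensation, then
`|L| ≤ ℵ₁`. -/
theorem card_le_aleph1_of_condenses_to_one
    {L : Type*} [LinearOrder L] (h : ∀ x y : L, (Set.uIcc x y).Countable) :
    Cardinal.mk L ≤ Cardinal.aleph 1 := by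
  rw [← succ_aleph0]
  exact mk_le_succ_of_forall_mk_Icc_le le_rfl fun a b =>
    le_aleph0_iff_set_countable.2 ((h a b).mono Icc_subset_uIcc)
end

section
/- If L is an uncountable linear order that condenses to 1 under the countable condensation, then L has no countable cofinal subset or L has no countable coinitial subset; that is, cf(L) = ω₁ or cf*(L) = ω₁. -/
open Set

theorem Set.biUnion_Icc_eq_univ_of_coinitial_of_cofinal {L : Type*} [Preorder L] {S T : Set L}
    (hT : ∀ l : L, ∃ t ∈ T, t ≤ l) (hS : ∀ l : L, ∃ s ∈ S, l ≤ s) :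
    ⋃ t ∈ T, ⋃ s ∈ S, Icc t s = univ := by
  refine eq_univ_of_forall fun l => ?_
  obtain ⟨t, ht, htl⟩ := hT l
  obtain ⟨s, hs, hls⟩ := hS l
  exact mem_biUnion ht (mem_biUnion hs ⟨htl, hls⟩)

theorem countable_of_countable_coinitial_of_countable_cofinal {L : Type*} [Preorder L]
    (hIcc : ∀ x y : L, (Icc x y).Countable) {S T : Set L} (hTc : T.Countable)
    (hT : ∀ l : L, ∃ t ∈ T, t ≤ l) (hSc : S.Countable) (hS : ∀ l : L, ∃ s ∈ S, l ≤ s) :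
    Countable L := by
  rw [← countable_univ_iff, ← biUnion_Icc_eq_univ_of_coinitial_of_cofinal hT hS]
  exact hTc.biUnion fun t _ => hSc.biUnion fun s _ => hIcc t s

/-- If `L` is an uncountable linear order that condenses to `1` under
the countable condensation, then `L` has no countable cofinal subset or `L` has no
countable coinitial subset; that is, `cf(L) = ω₁` or `cf*(L) = ω₁`. -/
theorem no_countable_cofinal_or_coinitial_of_uncountable_condenses_to_one
    {L : Type*} [LinearOrder L] [Uncountable L]
    (h : ∀ x y : L, (Set.uIcc x y).Countable) :
    (¬ ∃ S : Set L, S.Countable ∧ ∀ l : L, ∃ s ∈ S, l ≤ s) ∨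
      (¬ ∃ S : Set L, S.Countable ∧ ∀ l : L, ∃ s ∈ S, s ≤ l) := by
  by_contra! ⟨⟨S, hSc, hS⟩, ⟨T, hTc, hT⟩⟩
  have hIcc : ∀ x y : L, (Icc x y).Countable := fun x y => (h x y).mono Icc_subset_uIcc
  exact not_countable (countable_of_countable_coinitial_of_countable_cofinal hIcc hTc hT hSc hS)
end

section
/- Suppose L is a linear order with a least element that condenses to 1 under the countable condensation, has no countable cofinal subset, and admits a strictly increasing cofinal function x : ω₁ → L such that every l : L satisfies x α ≤ l < x (Order.succ α) for some α in ω₁. Then there is an order embedding of L into the ω₁-lengthened rational line U. -/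
noncomputable instance : SuccOrder Omega1 := SuccOrder.ofLinearWellFoundedLT Omega1

/-!
Every `l` lies in some block `[x α, x (succ α))`; choosing such an `α = a l` gives a monotone
index map, because the blocks are ordered like their indices. Each block lies in
`uIcc (x α) (x (succ α))`, hence is countable and embeds into `ℚ`. Ordering `L`
lexicographically by block index and then by the rational coordinate embeds it into `Dline`,
the last summand of `Uline`.
-/

open Set

theorem Set.Countable.exists_strictMonoOn {L β : Type*} [LinearOrder L] [LinearOrder β]
    [DenselyOrdered β] [Nontrivial β] {s : Set L} (hs : s.Countable) :
    ∃ f : L → β, StrictMonoOn f s := by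
  classical
  have := hs.to_subtype
  obtain ⟨e⟩ := Order.embedding_from_countable_to_dense s β
  refine ⟨fun l => if h : l ∈ s then e ⟨l, h⟩ else Classical.arbitrary β, ?_⟩
  intro l hl l' hl' hll'
  simp only [dif_pos hl, dif_pos hl']
  exact e.strictMono hll'

theorem strictMono_toLex_of_strictMonoOn_fibers {L ι Q : Type*} [Preorder L] [PartialOrder ι]
    [Preorder Q] {a : L → ι} (ha : Monotone a) {f : ι → L → Q}
    (hf : ∀ i, StrictMonoOn (f i) (a ⁻¹' {i})) :
    StrictMono fun l => toLex (a l, f (a l) l) := by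
  intro l l' hll'
  refine Prod.Lex.toLex_lt_toLex'.2 ⟨ha hll'.le, fun heq => ?_⟩
  dsimp only at heq ⊢
  rw [heq]
  exact hf _ heq rfl hll'

section Blocks

variable {L ι : Type*} [Preorder L] [LinearOrder ι] [SuccOrder ι] {x : ι → L} {a : L → ι}

theorem monotone_of_mem_Ico_succ (hx : Monotone x) (hle : ∀ l, x (a l) ≤ l)
    (hlt : ∀ l, l < x (Order.succ (a l))) : Monotone a := by
  intro l l' hll'
  by_contra! h
  have hsucc : x (Order.succ (a l')) ≤ x (a l) := hx (Order.succ_le_of_lt h)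
  exact (hll'.trans_lt ((hlt l').trans_le (hsucc.trans (hle l)))).false

theorem preimage_singleton_subset_Ico_succ (hle : ∀ l, x (a l) ≤ l)
    (hlt : ∀ l, l < x (Order.succ (a l))) (i : ι) :
    a ⁻¹' {i} ⊆ Ico (x i) (x (Order.succ i)) := by
  rintro l rfl
  exact ⟨hle l, hlt l⟩

end Blocks

theorem embeds_into_Uline_of_partitioned_general
    {L : Type*} [LinearOrder L]
    (hcond : ∀ x y : L, (Set.uIcc x y).Countable)
    (x : Omega1 → L) (hx : StrictMono x)
    (hcover : ∀ l : L, ∃ α : Omega1, x α ≤ l ∧ l < x (Order.succ α)) :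
    Nonempty (L ↪o Uline) := by
  choose a hle hlt using hcover
  have ha : Monotone a := monotone_of_mem_Ico_succ hx.monotone hle hlt
  have hblock : ∀ α, (a ⁻¹' {α}).Countable := fun α =>
    (hcond _ _).mono ((preimage_singleton_subset_Ico_succ hle hlt α).trans
      (Ico_subset_Icc_self.trans Icc_subset_uIcc))
  choose q hq using fun α => (hblock α).exists_strictMonoOn (β := ℚ)
  have hD : StrictMono fun l => (toLex (a l, toLex (Sum.inr (q (a l) l))) : Dline) :=
    strictMono_toLex_of_strictMonoOn_fibers ha fun α =>
      Sum.Lex.inr_strictMono.comp_strictMonoOn (hq α)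
  exact ⟨OrderEmbedding.ofStrictMono _
    (Sum.Lex.inr_strictMono.comp (Sum.Lex.inr_strictMono.comp hD))⟩

/-- Suppose `L` is a linear order with a least element that condenses
to `1` under the countable condensation, has no countable cofinal subset, and admits a
strictly increasing cofinal sequence `x : ω₁ → L` such that every `l : L` satisfies
`x α ≤ l < x (succ α)` for some `α < ω₁`. Then `L` order-embeds into the
`ω₁`-lengthened rational line `U`. -/
theorem embeds_into_Uline_of_partitioned
    {L : Type*} [LinearOrder L]
    (hbot : ∃ b : L, ∀ z : L, b ≤ z)
    (hcond : ∀ x y : L, (Set.uIcc x y).Countable)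
    (hcof : ¬ ∃ S : Set L, S.Countable ∧ ∀ l : L, ∃ s ∈ S, l ≤ s)
    (x : Omega1 → L) (hx : StrictMono x)
    (hcover : ∀ l : L, ∃ α : Omega1, x α ≤ l ∧ l < x (Order.succ α)) :
    Nonempty (L ↪o Uline) :=
  embeds_into_Uline_of_partitioned_general hcond x hx hcover
end

section
/- Let L be a linear order with a least element that condenses to 1 under the countable condensation and has no countable cofinal subset (i.e. cf(L) = ω₁). Then there is an order embedding of L into the ω₁-lengthened rational line U. -/
/-!
Every initial segment `Iic x` is countable (it lies in `[⊥, x]`), and every countable subset of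
`L` has a strict upper bound (otherwise it would be cofinal). Transfinite recursion therefore
yields a strictly increasing `ω₁`-sequence `f` in `L`, which is cofinal because its range is
uncountable. Sending `l` to the least `α` with `l < f α` cuts `L` into `ω₁` consecutive countable
blocks; each block embeds into the dense order `PUnit ⊕ₗ ℚ`, and the blocks together embed
lexicographically into `D`, which is a final segment of `U`.
-/

open Set Function

theorem Omega1.countable_Iio (α : Omega1) : (Iio α).Countable := by
  rw [← Cardinal.le_aleph0_iff_set_countable, ← Cardinal.lt_aleph_one_iff]
  simpa using Cardinal.mk_Iio_lt α

instance Omega1.uncountable : Uncountable Omega1 := by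
  rw [← Cardinal.aleph0_lt_mk_iff]
  simp

theorem exists_strictMono_of_countable_Iio {ι L : Type*} [Preorder ι] [WellFoundedLT ι]
    [Preorder L] (hι : ∀ i : ι, (Iio i).Countable)
    (hL : ∀ S : Set L, S.Countable → ∃ x, ∀ s ∈ S, s < x) : ∃ f : ι → L, StrictMono f := by
  choose ub hub using hL
  have hrange (i : ι) (IH : ∀ j < i, L) : (range fun j : Iio i => IH j j.2).Countable :=
    have := (hι i).to_subtype
    countable_range _
  let f : ι → L := WellFoundedLT.fix (motive := fun _ => L) fun i IH => ub _ (hrange i IH)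
  have hf i : f i = ub _ (hrange i fun j _ => f j) := WellFoundedLT.fix_eq _ i
  refine ⟨f, fun j i hji => ?_⟩
  rw [hf i]
  exact hub _ _ _ ⟨⟨j, hji⟩, rfl⟩

theorem exists_lt_apply_of_countable_Iic {ι L : Type*} [Uncountable ι] [LinearOrder L]
    (hL : ∀ x : L, (Iic x).Countable) {f : ι → L} (hf : Injective f) (l : L) :
    ∃ i, l < f i := by
  by_contra! h
  have := ((hL l).mono (range_subset_iff.2 h)).to_subtype
  exact not_countable (rangeFactorization_injective.2 hf).countable

theorem exists_monotone_forall_lt_apply {ι L : Type*} [LinearOrder ι] [WellFoundedLT ι]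
    [Preorder L] {f : ι → L} (hf : ∀ l, ∃ i, l < f i) :
    ∃ g : L → ι, Monotone g ∧ ∀ l, l < f (g l) := by
  let g l := wellFounded_lt.min {i | l < f i} (hf l)
  have hg l : l < f (g l) := wellFounded_lt.min_mem {i | l < f i} (hf l)
  exact ⟨g, fun l l' hl => WellFounded.min_le (β := ι) _ (hl.trans_lt (hg l')), hg⟩

theorem exists_orderEmbedding_lex_of_countable_fibers {L ι β : Type*} [LinearOrder L]
    [PartialOrder ι] [LinearOrder β] [DenselyOrdered β] [Nontrivial β] {g : L → ι}
    (hg : Monotone g) (hfib : ∀ i, (g ⁻¹' {i}).Countable) : Nonempty (L ↪o ι ×ₗ β) := by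
  have e i : g ⁻¹' {i} ↪o β :=
    have := (hfib i).to_subtype
    (Order.embedding_from_countable_to_dense _ _).some
  let h l : β := e (g l) ⟨l, rfl⟩
  have h_eq i l (hl : g l = i) : h l = e i ⟨l, hl⟩ := by subst hl; rfl
  refine ⟨OrderEmbedding.ofStrictMono (fun l => toLex (g l, h l)) fun l l' hll' => ?_⟩
  refine Prod.Lex.toLex_lt_toLex'.2 ⟨hg hll'.le, fun hgl => ?_⟩
  rw [h_eq _ l rfl, h_eq _ l' hgl.symm]
  exact (e _).lt_iff_lt.2 hll'

/-- Let `L` be a linear order with a least element that condenses to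
`1` under the countable condensation and has no countable cofinal subset
(`cf(L) = ω₁`). Then `L` order-embeds into the `ω₁`-lengthened rational line `U`. -/
theorem embeds_into_Uline_of_bot_of_condenses_to_one
    {L : Type*} [LinearOrder L]
    (hbot : ∃ b : L, ∀ z : L, b ≤ z)
    (hcond : ∀ x y : L, (Set.uIcc x y).Countable)
    (hcof : ¬ ∃ S : Set L, S.Countable ∧ ∀ l : L, ∃ s ∈ S, l ≤ s) :
    Nonempty (L ↪o Uline) := by
  obtain ⟨b, hb⟩ := hbot
  have hIic (x : L) : (Iic x).Countable :=
    (hcond b x).mono fun y hy => mem_uIcc.2 (Or.inl ⟨hb y, hy⟩)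
  have hbdd (S : Set L) (hS : S.Countable) : ∃ x, ∀ s ∈ S, s < x := by
    by_contra! h
    exact hcof ⟨S, hS, h⟩
  obtain ⟨f, hf⟩ := exists_strictMono_of_countable_Iio Omega1.countable_Iio hbdd
  obtain ⟨g, hg, hlt⟩ :=
    exists_monotone_forall_lt_apply (exists_lt_apply_of_countable_Iic hIic hf.injective)
  obtain ⟨e⟩ : Nonempty (L ↪o Dline) := exists_orderEmbedding_lex_of_countable_fibers hg
    fun α => (hIic (f α)).mono fun l (hl : g l = α) => hl ▸ (hlt l).le
  exact ⟨e.trans <|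
    OrderEmbedding.ofStrictMono _ (Sum.Lex.inr_strictMono.comp Sum.Lex.inr_strictMono)⟩
end

section
/- Let L be a nonempty linear order that condenses to 1 under the countable condensation. Then L has no countable cofinal subset (i.e. cf(L) = ω₁) if and only if every nonempty upward-closed subset of L (every nonempty tail/final segment) is uncountable. -/
open Set

theorem IsUpperSet.isCofinal {α : Type*} [LinearOrder α] {T : Set α} (hT : IsUpperSet T)
    (hne : T.Nonempty) : IsCofinal T := by
  obtain ⟨a, ha⟩ := hne
  intro l
  rcases le_total l a with hla | hal
  · exact ⟨a, ha, hla⟩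
  · exact ⟨l, hT hal ha, le_rfl⟩

/-- Every point above `S` lies in an interval `Icc s t` with `s, t ∈ S`. -/
theorem IsCofinal.countable_upperClosure {α : Type*} [Preorder α] {S : Set α}
    (hS : IsCofinal S) (hSc : S.Countable) (hIcc : ∀ x y : α, (Icc x y).Countable) :
    (upperClosure S : Set α).Countable := by
  refine (hSc.biUnion fun s _ ↦ hSc.biUnion fun t _ ↦ hIcc s t).mono ?_
  intro x hx
  obtain ⟨s, hs, hsx⟩ := mem_upperClosure.1 hx
  obtain ⟨t, ht, hxt⟩ := hS x
  exact mem_biUnion hs (mem_biUnion ht ⟨hsx, hxt⟩)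

/-- Let `L` be a nonempty linear order that condenses to `1` under the
countable condensation. Then `L` has no countable cofinal subset (`cf(L) = ω₁`) iff every
nonempty upward-closed subset (tail) of `L` is uncountable. -/
theorem no_countable_cofinal_iff_no_countable_tail
    {L : Type*} [LinearOrder L] [Nonempty L]
    (h : ∀ x y : L, (Set.uIcc x y).Countable) :
    (¬ ∃ S : Set L, S.Countable ∧ ∀ l : L, ∃ s ∈ S, l ≤ s) ↔
      ∀ T : Set L, T.Nonempty → (∀ a ∈ T, ∀ b : L, a ≤ b → b ∈ T) → ¬ T.Countable := by
  constructor
  · rintro hno T hne hT hTc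
    exact hno ⟨T, hTc, IsUpperSet.isCofinal (fun a b hab ha ↦ hT a ha b hab) hne⟩
  · rintro hT ⟨S, hSc, hS⟩
    have hS : IsCofinal S := hS
    exact hT _ (hS.nonempty.mono subset_upperClosure)
      (fun a ha b hab ↦ (upperClosure S).upper hab ha)
      (hS.countable_upperClosure hSc fun x y ↦ (h x y).mono Icc_subset_uIcc)
end

section
/- If L is an uncountable linear order that admits an order embedding into the ω₁-lengthened rational line U, then L contains a strictly monotone sequence of length ω₁: there exists a function f : ω₁ → L that is strictly increasing (StrictMono) or strictly decreasing (StrictAnti). -/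
/-!
Only countably many points of `L` can land in the middle copy of `ℚ`, so uncountably many land
in `D` or in its reverse; by duality say in `D = ω₁ ×ₗ P` with `P` countable. Each block
`{β} × P` then holds countably many of them, so they meet uncountably many blocks. An uncountable
well order contains a copy of `ω₁`, and one point from each of `ω₁` increasing blocks is an
increasing `ω₁`-sequence.
-/

universe u

open Set

instance Lex.instCountable {α : Type*} [Countable α] : Countable (Lex α) :=
  inferInstanceAs (Countable α)

open Ordinal Cardinal in
theorem exists_strictMono_omega1 {W : Type u} [LinearOrder W] [WellFoundedLT W] [Uncountable W] :
    ∃ g : Omega1 → W, StrictMono g := by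
  have : Ordinal.lift.{u} (typeLT Omega1) ≤ Ordinal.lift.{0} (typeLT W) := by
    rw [type_toType, lift_ord, ord_le, ← Ordinal.lift_card, card_type]
    simp
  obtain ⟨e⟩ := lift_type_le.1 this
  exact ⟨e, fun a b h => e.map_rel_iff.2 h⟩

theorem exists_strictMono_omega1_of_strictMono_lex {C β : Type*} [LinearOrder C] [Uncountable C]
    [Preorder β] [Countable β] {h : C → Lex (Omega1 × β)} (hh : StrictMono h) :
    ∃ g : Omega1 → C, StrictMono g := by
  set block : C → Omega1 := fun x => (ofLex (h x)).1
  have block_reflect_lt {x y : C} (hxy : block x < block y) : x < y :=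
    hh.lt_iff_lt.1 (Prod.Lex.lt_iff.2 (.inl hxy))
  have countable_fiber (i : Omega1) : (block ⁻¹' {i}).Countable := by
    refine Function.Injective.countable (f := fun x : block ⁻¹' {i} => (ofLex (h x)).2) ?_
    intro x y hxy
    refine Subtype.ext (hh.injective (ofLex.injective (Prod.ext ?_ hxy)))
    exact x.2.trans y.2.symm
  have : Uncountable (range block) := by
    by_contra hc
    rw [not_uncountable_iff] at hc
    refine not_countable (Countable.of_preimage_singleton (f := rangeFactorization block) fun i => ?_)
    convert countable_fiber i using 1
    ext
    simp [rangeFactorization, Subtype.ext_iff]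
  obtain ⟨g, hg⟩ := exists_strictMono_omega1 (W := range block)
  choose x hx using fun a => (g a).2
  exact ⟨x, fun a b hab => block_reflect_lt (by rw [hx, hx]; exact hg hab)⟩

theorem exists_strictAnti_omega1_of_strictAnti_lex {C β : Type*} [LinearOrder C] [Uncountable C]
    [Preorder β] [Countable β] {h : C → Lex (Omega1 × β)} (hh : StrictAnti h) :
    ∃ g : Omega1 → C, StrictAnti g := by
  have : Uncountable Cᵒᵈ := ‹Uncountable C›
  obtain ⟨g, hg⟩ := exists_strictMono_omega1_of_strictMono_lex hh.dual_left
  exact ⟨OrderDual.ofDual ∘ g, fun a b hab => hg hab⟩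

theorem StrictMono.exists_strictMono_preimage_range {α β γ : Type*} [Preorder α] [LinearOrder β]
    [Preorder γ] {f : α → γ} (hf : StrictMono f) {e : β → γ} (he : StrictMono e) :
    ∃ h : f ⁻¹' range e → β, StrictMono h :=
  ⟨fun x => x.2.choose, fun x y hxy => he.lt_iff_lt.1 <| by
    rw [x.2.choose_spec, y.2.choose_spec]; exact hf hxy⟩

/-- An uncountable linear order that order-embeds into the
`ω₁`-lengthened rational line `U` contains a strictly monotone sequence of length `ω₁`:
some `f : ω₁ → L` is strictly increasing or strictly decreasing. -/
theorem exists_strictMono_or_strictAnti_omega1_seq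
    {L : Type*} [LinearOrder L] [Uncountable L] (f : L ↪o Uline) :
    ∃ g : Omega1 → L, StrictMono g ∨ StrictAnti g := by
  set A := f ⁻¹' range (Sum.inlₗ : Dlineᵒᵈ → Uline)
  set Q := f ⁻¹' range (Sum.inrₗ ∘ Sum.inlₗ : ℚ → Uline)
  set D := f ⁻¹' range (Sum.inrₗ ∘ Sum.inrₗ : Dline → Uline)
  have cover : univ ⊆ A ∪ Q ∪ D := by
    intro x _
    rcases hx : f x with d | q | d
    exacts [.inl (.inl ⟨d, hx.symm⟩), .inl (.inr ⟨q, hx.symm⟩), .inr ⟨d, hx.symm⟩]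
  have hQ : Q.Countable := by
    obtain ⟨h, hh⟩ : ∃ h : Q → ℚ, StrictMono h :=
      f.strictMono.exists_strictMono_preimage_range
        (Sum.Lex.inr_strictMono.comp Sum.Lex.inl_strictMono)
    exact countable_coe_iff.1 hh.injective.countable
  have : ¬ (A.Countable ∧ D.Countable) := fun ⟨hA, hD⟩ =>
    not_countable_univ (((hA.union hQ).union hD).mono cover)
  rcases not_and_or.1 this with hA | hD
  · have : Uncountable A := by rwa [← not_countable_iff, countable_coe_iff]
    obtain ⟨h, hh⟩ : ∃ h : A → Dlineᵒᵈ, StrictMono h :=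
      f.strictMono.exists_strictMono_preimage_range Sum.Lex.inl_strictMono
    obtain ⟨g, hg⟩ := exists_strictAnti_omega1_of_strictAnti_lex hh.dual_right
    exact ⟨_, .inr ((Subtype.strictMono_coe _).comp_strictAnti hg)⟩
  · have : Uncountable D := by rwa [← not_countable_iff, countable_coe_iff]
    obtain ⟨h, hh⟩ : ∃ h : D → Dline, StrictMono h :=
      f.strictMono.exists_strictMono_preimage_range
        (Sum.Lex.inr_strictMono.comp Sum.Lex.inr_strictMono)
    obtain ⟨g, hg⟩ := exists_strictMono_omega1_of_strictMono_lex hh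
    exact ⟨_, .inl ((Subtype.strictMono_coe _).comp hg)⟩
end

section
/- Let L₁ be a linear order that condenses to 1 under the countable condensation, and let L₂ be a countable linear order. Then the lexicographic product Lex (L₁ × L₂) condenses to 1 under the countable condensation: for all x y : Lex (L₁ × L₂), the interval Set.uIcc x y is countable. In particular L₁ ·_ω L₂ ≅ 1. -/
open Set

theorem Set.Countable.preimage_fst_ofLex {α β : Type*} [Countable β] {s : Set α}
    (hs : s.Countable) : ((fun z : α ×ₗ β ↦ (ofLex z).1) ⁻¹' s).Countable :=
  ((hs.prod (countable_univ (α := β))).preimage ofLex.injective).mono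
    fun _ hz ↦ mem_prod.2 ⟨hz, mem_univ _⟩

/-- If `L₁` condenses to `1` under the countable condensation and `L₂`
is a countable linear order, then the lexicographic product `Lex (L₁ × L₂)` condenses to
`1` under the countable condensation; in particular `L₁ ·_ω L₂ ≅ 1`. -/
theorem lex_prod_countable_condenses_to_one
    {L₁ L₂ : Type*} [LinearOrder L₁] [LinearOrder L₂] [Countable L₂]
    (h : ∀ x y : L₁, (Set.uIcc x y).Countable) :
    ∀ x y : Lex (L₁ × L₂), (Set.uIcc x y).Countable := fun x y ↦
  (h (ofLex x).1 (ofLex y).1).preimage_fst_ofLex.mono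
    fun _ hz ↦ Prod.Lex.monotone_fst_ofLex.mapsTo_uIcc hz
end
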